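/- arXiv:1507.02413 — 4 statements merged into one kernel-verified Lean document; each statement's English description precedes it below -/
import Mathlib

section
/- Every segmented downward directed set of indices 𝕀=(I,≤,𝓘) is isomorphic, in the category of sets of indices, to its canonical set of indices 𝕀̄=(I,≤,𝒮_I) where 𝒮_I = {(∅,a] | a∈I} ∪ {I}; the isomorphism is induced by the identity map on I. -/
/-- A set of indices `𝕀 = (I, ≤, 𝓘)`. -/
structure SoI (I : Type) where
  le : I → I → Prop
  refl : ∀ a, le a a
  trans : ∀ a b c, le a b → le b c → le a c
  sets : Set (Set I)
  empty_not_mem : ∅ ∉ sets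
  univ_mem : Set.univ ∈ sets
  inter : ∀ A ∈ sets, ∀ B ∈ sets, ∃ C ∈ sets, C ⊆ A ∩ B
  directed : ∀ (e a : I), ∀ A ∈ sets, a ∈ A → le e a →
    (∃ x, x ∈ A ∧ le x e) ∧
    ∀ b c : I, b ∈ A → le b e → c ∈ A → le c e →
      ∃ d, d ∈ A ∧ le d e ∧ (le d b ∧ d ≠ b) ∧ (le d c ∧ d ≠ c)

/-- `A_{≤ a}` -/
def SoI.down {I : Type} (S : SoI I) (A : Set I) (a : I) : Set I :=
  {ε | ε ∈ A ∧ S.le ε a}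

/-- `f : A_{≤a} → B_{≤b}` is infinitesimal. -/
def Infinitesimal {I₁ I₂ : Type} (S₁ : SoI I₁) (S₂ : SoI I₂) (f : I₂ → I₁)
    (A : Set I₁) (a : I₁) (B : Set I₂) (b : I₂) : Prop :=
  ∀ α ∈ S₁.down A a, ∃ e ∈ S₂.down B b, ∀ ε₂ ∈ S₂.down B e, f ε₂ ∈ S₁.down A α

/-- `f : 𝕀₁ → 𝕀₂` is a morphism of sets of indices. -/
def IsMorphism {I₁ I₂ : Type} (S₁ : SoI I₁) (S₂ : SoI I₂) (f : I₂ → I₁) : Prop :=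
  ∀ A ∈ S₁.sets, ∀ a ∈ A, ∃ B ∈ S₂.sets, ∀ b ∈ B, Infinitesimal S₁ S₂ f A a B b

/-- `P ε` holds for `ε` sufficiently small in `A_{≤a}`. -/
def EvSmallOn {I : Type} (S : SoI I) (A : Set I) (a : I) (P : I → Prop) : Prop :=
  ∃ e ∈ S.down A a, ∀ ε ∈ S.down A e, P ε

/-- `P ε` holds for `ε` sufficiently small in `𝕀`. -/
def EvSmall {I : Type} (S : SoI I) (P : I → Prop) : Prop :=
  ∃ A ∈ S.sets, ∀ a ∈ A, EvSmallOn S A a P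

/-- `i >_𝕀 j`. -/
def NetGt {I : Type} (S : SoI I) (i j : I → ℝ) : Prop :=
  EvSmall S fun ε => i ε > j ε

/-- `x_ε = O_{a,A}(y_ε)`. -/
def BigOOn {I : Type} (S : SoI I) (A : Set I) (a : I) (x y : I → ℝ) : Prop :=
  ∃ H : ℝ, 0 < H ∧ ∃ ε₀ ∈ S.down A a, ∀ ε ∈ S.down A ε₀, |x ε| ≤ H * |y ε|

/-- `x_ε = O(y_ε)` as `ε ∈ 𝕀`. -/
def BigO {I : Type} (S : SoI I) (x y : I → ℝ) : Prop :=
  ∃ A ∈ S.sets, ∀ a ∈ A, BigOOn S A a x y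

/-- `lim_𝕀 i = +∞`. -/
def LimTop {I : Type} (S : SoI I) (i : I → ℝ) : Prop :=
  ∃ A ∈ S.sets, ∀ a ∈ A, ∀ M : ℝ, ∃ e, S.le e a ∧ ∀ ε ∈ A, S.le ε e → M < i ε

/-- `ℬ` is an asymptotic gauge on `𝕀`. -/
def IsAG {I : Type} (S : SoI I) (B : Set (I → ℝ)) : Prop :=
  (∃ i ∈ B, LimTop S i) ∧
  (∀ i ∈ B, ∀ j ∈ B, ∃ p ∈ B, BigO S (fun ε => i ε * j ε) p) ∧
  (∀ i ∈ B, ∀ r : ℝ, ∃ σ ∈ B, BigO S (fun ε => r * i ε) σ) ∧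
  (∀ i ∈ B, ∀ j ∈ B, ∃ s ∈ B, NetGt S s (fun _ => 0) ∧
    BigO S (fun ε => |i ε| + |j ε|) s)

/-- The moderate nets `ℝ_M(ℬ)`. -/
def RM {I : Type} (S : SoI I) (B : Set (I → ℝ)) : Set (I → ℝ) :=
  {x | ∃ b ∈ B, BigO S x b}

/-- `ℬ ∘ f = {b ∘ f ∣ b ∈ ℬ}`. -/
def compAG {I₁ I₂ : Type} (B : Set (I₁ → ℝ)) (f : I₂ → I₁) : Set (I₂ → ℝ) :=
  {g | ∃ b ∈ B, g = b ∘ f}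

/-- `𝕀` is segmented. -/
def Segmented {I : Type} (S : SoI I) : Prop :=
  ∀ A ∈ S.sets, ∃ a, {ε | S.le ε a} ⊆ A

/-- `(I, ≤)` is downward directed. -/
def DownDirected {I : Type} (S : SoI I) : Prop :=
  ∀ a b, ∃ c, S.le c a ∧ S.le c b

/-!
Both morphism conditions for the identity come down to one fact: if `B` is a lower set and
every point of `B` below a point of `A` lies in `A`, then `id : A_{≤a} → B_{≤b}` is
infinitesimal, a common lower bound of `b` and `α` (downward directedness) serving for each
`α ∈ A`. From `𝕀` to `𝕀̄`, segmentation supplies `B = (∅, a₀] ⊆ A`; from `𝕀̄` to `𝕀` one takes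
`B = I`, every canonical set being a lower set.
-/

namespace SoI

variable {I : Type}

def IsLowerSet (S : SoI I) (A : Set I) : Prop :=
  ∀ b ∈ A, ∀ c, S.le c b → c ∈ A

theorem isLowerSet_univ (S : SoI I) : S.IsLowerSet Set.univ :=
  fun _ _ _ _ => trivial

theorem isLowerSet_Iic (S : SoI I) (a : I) : S.IsLowerSet {ε | S.le ε a} :=
  fun b hb c hcb => S.trans c b a hcb hb

end SoI

theorem DownDirected.of_le_eq {I : Type} {S₁ S₂ : SoI I} (hle : S₁.le = S₂.le)
    (hdd : DownDirected S₁) : DownDirected S₂ := by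
  rwa [DownDirected, ← hle]

theorem infinitesimal_id_of_isLowerSet {I : Type} {S₁ S₂ : SoI I} (hle : S₂.le = S₁.le)
    (hdd : DownDirected S₁) {A B : Set I} (hB : S₁.IsLowerSet B)
    (hBA : ∀ α ∈ A, ∀ ε ∈ B, S₁.le ε α → ε ∈ A) (a : I) {b : I} (hb : b ∈ B) :
    Infinitesimal S₁ S₂ id A a B b := by
  rintro α ⟨hαA, -⟩
  obtain ⟨e, heb, heα⟩ := hdd b α
  refine ⟨e, ⟨hB b hb e heb, hle ▸ heb⟩, ?_⟩
  rintro ε ⟨hεB, hεe⟩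
  have hεα : S₁.le ε α := S₁.trans ε e α (hle ▸ hεe) heα
  exact ⟨hBA α hαA ε hεB hεα, hεα⟩

/-- Every segmented downward directed set of indices is isomorphic to its
canonical set of indices `(I, ≤, 𝒮_I)`, the isomorphism being induced by the
identity of `I` in both directions. -/
theorem canonical_iso {I : Type} (S : SoI I)
    (hseg : Segmented S) (hdd : DownDirected S)
    (Sbar : SoI I) (hle : Sbar.le = S.le)
    (hsets : Sbar.sets = {B | ∃ a, B = {ε | S.le ε a}} ∪ {Set.univ}) :
    IsMorphism S Sbar id ∧ IsMorphism Sbar S id := by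
  have hlower : ∀ A ∈ Sbar.sets, S.IsLowerSet A := by
    rw [hsets]
    rintro A (⟨a, rfl⟩ | rfl)
    · exact S.isLowerSet_Iic a
    · exact S.isLowerSet_univ
  constructor
  · intro A hA a _
    obtain ⟨a₀, hIic⟩ := hseg A hA
    refine ⟨{ε | S.le ε a₀}, hsets ▸ Or.inl ⟨a₀, rfl⟩, fun b hb => ?_⟩
    exact infinitesimal_id_of_isLowerSet hle hdd (S.isLowerSet_Iic a₀)
      (fun _ _ ε hε _ => hIic hε) a hb
  · intro A hA a _
    refine ⟨Set.univ, S.univ_mem, fun b hb => ?_⟩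
    exact infinitesimal_id_of_isLowerSet hle.symm (hdd.of_le_eq hle.symm)
      Sbar.isLowerSet_univ (fun α hα ε _ hεα => hlower A hA α hα ε (hle ▸ hεα)) a hb
end

section
/- Let ℬ₁ = AG(b₁) and ℬ₂ = AG(b₂) be principal asymptotic gauges on the special set of indices 𝕀ˢ with ℝ_M(ℬ₁) ⊊ ℝ_M(ℬ₂). Then there exists a principal asymptotic gauge ℬ₃ on 𝕀ˢ with ℝ_M(ℬ₁) ⊊ ℝ_M(ℬ₃) ⊊ ℝ_M(ℬ₂). -/
/-- The carrier `(0,1]` of the special set of indices. -/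
def I01 : Type := {x : ℝ // 0 < x ∧ x ≤ 1}

/-- `P` holds for `ε` sufficiently small, i.e. eventually as `ε → 0⁺`. -/
def EvS (P : I01 → Prop) : Prop :=
  ∃ ε₀ : I01, ∀ ε : I01, ε.1 ≤ ε₀.1 → P ε

/-- `x_ε = O(y_ε)` as `ε → 0⁺` (the big-O of the special set of indices). -/
def BigOs (x y : I01 → ℝ) : Prop :=
  ∃ H : ℝ, 0 < H ∧ EvS fun ε => |x ε| ≤ H * |y ε|

/-- The moderate nets `ℝ_M(ℬ)` on the special set of indices. -/
def RMs (B : Set (I01 → ℝ)) : Set (I01 → ℝ) :=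
  {x | ∃ b ∈ B, BigOs x b}

/-- `AG(b) = {b^m ∣ m ∈ ℕ}`. -/
def AGgen (b : I01 → ℝ) : Set (I01 → ℝ) :=
  {g | ∃ m : ℕ, g = fun ε => (b ε) ^ m}

/-- `lim_{ε→0⁺} i_ε = +∞`. -/
def LimTopS (i : I01 → ℝ) : Prop :=
  ∀ M : ℝ, EvS fun ε => M < i ε

/-- `ℬ` is an asymptotic gauge on the special set of indices. -/
def IsAGs (B : Set (I01 → ℝ)) : Prop :=
  (∃ i ∈ B, LimTopS i) ∧
  (∀ i ∈ B, ∀ j ∈ B, ∃ p ∈ B, BigOs (fun ε => i ε * j ε) p) ∧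
  (∀ i ∈ B, ∀ r : ℝ, ∃ σ ∈ B, BigOs (fun ε => r * i ε) σ) ∧
  (∀ i ∈ B, ∀ j ∈ B, ∃ s ∈ B, (EvS fun ε => 0 < s ε) ∧
    BigOs (fun ε => |i ε| + |j ε|) s)

/-- A principal AG: one admitting a generator. -/
def Principal (B : Set (I01 → ℝ)) : Prop :=
  IsAGs B ∧ ∃ b ∈ B, RMs (AGgen b) = RMs B

/-- `ℬ ∘ f`. -/
def compS (B : Set (I01 → ℝ)) (f : I01 → I01) : Set (I01 → ℝ) :=
  {g | ∃ b ∈ B, g = b ∘ f}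

/-- The filter `ε → 0⁺` on `(0,1]`. -/
def zeroPlus : Filter I01 :=
  Filter.comap (fun ε : I01 => ε.1) (nhdsWithin 0 (Set.Ioi 0))

/-!
Taking logarithms, `RMs (AGgen b) ⊆ RMs (AGgen c)` holds exactly when `log |b| = O(log |c|)`,
so the moderate classes of principal gauges are ordered like the growth classes of their
log-scales `u = log |b₁|` and `v = log |b₂|`. If `u = O(v)` but not `v = O(u)`, the geometric
mean `w = √(u v)` lies strictly between the two, and `b₃ = exp w` generates the gauge sought.
-/

open Real

theorem EvS.mono {P Q : I01 → Prop} (hP : EvS P) (h : ∀ ε, P ε → Q ε) : EvS Q := by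
  obtain ⟨ε₀, hε₀⟩ := hP
  exact ⟨ε₀, fun ε hε => h ε (hε₀ ε hε)⟩

theorem EvS.and {P Q : I01 → Prop} (hP : EvS P) (hQ : EvS Q) :
    EvS fun ε => P ε ∧ Q ε := by
  obtain ⟨a, ha⟩ := hP
  obtain ⟨b, hb⟩ := hQ
  refine ⟨⟨min a.1 b.1, lt_min a.2.1 b.2.1, (min_le_left _ _).trans a.2.2⟩, fun ε hε => ?_⟩
  exact ⟨ha ε (hε.trans (min_le_left _ _)), hb ε (hε.trans (min_le_right _ _))⟩

theorem evS_of_forall {P : I01 → Prop} (h : ∀ ε, P ε) : EvS P :=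
  ⟨⟨1, one_pos, le_rfl⟩, fun ε _ => h ε⟩

theorem LimTopS.comp {i : I01 → ℝ} {f : ℝ → ℝ} (hi : LimTopS i)
    (hf : Filter.Tendsto f Filter.atTop Filter.atTop) : LimTopS fun ε => f (i ε) := by
  intro M
  obtain ⟨N, hN⟩ := Filter.eventually_atTop.mp (hf.eventually_gt_atTop M)
  exact (hi N).mono fun ε hε => hN _ hε.le

theorem mem_RMs_AGgen_iff {x b : I01 → ℝ} :
    x ∈ RMs (AGgen b) ↔ ∃ m : ℕ, ∃ H : ℝ, 0 < H ∧ EvS fun ε => |x ε| ≤ H * |b ε| ^ m := by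
  constructor
  · rintro ⟨g, ⟨m, rfl⟩, H, hH, hev⟩
    exact ⟨m, H, hH, hev.mono fun ε h => by simpa only [abs_pow] using h⟩
  · rintro ⟨m, H, hH, hev⟩
    exact ⟨fun ε => b ε ^ m, ⟨m, rfl⟩, H, hH, hev.mono fun ε h => by simpa only [abs_pow] using h⟩

theorem self_mem_RMs_AGgen (b : I01 → ℝ) : b ∈ RMs (AGgen b) :=
  mem_RMs_AGgen_iff.mpr ⟨1, 1, one_pos, evS_of_forall fun ε => by simp⟩

theorem RMs_AGgen_subset_iff_mem {b c : I01 → ℝ} :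
    RMs (AGgen b) ⊆ RMs (AGgen c) ↔ b ∈ RMs (AGgen c) := by
  refine ⟨fun h => h (self_mem_RMs_AGgen b), fun hb x hx => ?_⟩
  obtain ⟨p, K, hK, hbc⟩ := mem_RMs_AGgen_iff.mp hb
  obtain ⟨m, H, hH, hxb⟩ := mem_RMs_AGgen_iff.mp hx
  refine mem_RMs_AGgen_iff.mpr ⟨p * m, H * K ^ m, by positivity, ?_⟩
  refine (hxb.and hbc).mono fun ε ⟨hx, hb⟩ => ?_
  calc |x ε| ≤ H * |b ε| ^ m := hx
    _ ≤ H * (K * |c ε| ^ p) ^ m := by gcongr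
    _ = H * K ^ m * |c ε| ^ (p * m) := by rw [mul_pow, ← pow_mul]; ring

theorem IsAGs.limTopS_abs {b : I01 → ℝ} (h : IsAGs (AGgen b)) : LimTopS fun ε => |b ε| := by
  obtain ⟨i, ⟨m, rfl⟩, hlim⟩ := h.1
  intro M
  refine (hlim (max M 0 ^ m)).mono fun ε hε => ?_
  by_contra! hle
  have : b ε ^ m ≤ max M 0 ^ m := calc
    b ε ^ m ≤ |b ε| ^ m := by rw [← abs_pow]; exact le_abs_self _
    _ ≤ max M 0 ^ m := by gcongr; exact hle.trans (le_max_left _ _)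
  exact this.not_gt hε

theorem isAGs_AGgen_of_one_le {b : I01 → ℝ} (hb : ∀ ε, 1 ≤ b ε) (hlim : LimTopS b) :
    IsAGs (AGgen b) := by
  have hb0 : ∀ ε, 0 ≤ b ε := fun ε => zero_le_one.trans (hb ε)
  refine ⟨⟨b, ⟨1, by simp⟩, hlim⟩, ?_, ?_, ?_⟩
  · rintro _ ⟨m, rfl⟩ _ ⟨k, rfl⟩
    exact ⟨fun ε => b ε ^ (m + k), ⟨m + k, rfl⟩, 1, one_pos,
      evS_of_forall fun ε => by simp [pow_add]⟩
  · rintro _ ⟨m, rfl⟩ r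
    refine ⟨fun ε => b ε ^ m, ⟨m, rfl⟩, |r| + 1, by positivity, evS_of_forall fun ε => ?_⟩
    rw [abs_mul]
    gcongr
    linarith
  · rintro _ ⟨m, rfl⟩ _ ⟨k, rfl⟩
    refine ⟨fun ε => b ε ^ max m k, ⟨max m k, rfl⟩,
      evS_of_forall fun ε => pow_pos (one_pos.trans_le (hb ε)) _, 2, two_pos,
      evS_of_forall fun ε => ?_⟩
    have hm : b ε ^ m ≤ b ε ^ max m k := pow_le_pow_right₀ (hb ε) (le_max_left _ _)
    have hk : b ε ^ k ≤ b ε ^ max m k := pow_le_pow_right₀ (hb ε) (le_max_right _ _)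
    simp only [abs_of_nonneg (pow_nonneg (hb0 ε) _),
      abs_of_nonneg (add_nonneg (pow_nonneg (hb0 ε) m) (pow_nonneg (hb0 ε) k))]
    linarith

theorem mem_RMs_AGgen_iff_bigOs_log {b c : I01 → ℝ} (hb : LimTopS fun ε => |b ε|)
    (hc : LimTopS fun ε => |c ε|) :
    b ∈ RMs (AGgen c) ↔ BigOs (fun ε => log |b ε|) (fun ε => log |c ε|) := by
  constructor
  · intro hbc
    obtain ⟨m, H, hH, hle⟩ := mem_RMs_AGgen_iff.mp hbc
    refine ⟨|log H| + m + 1, by positivity, ((hle.and (hb 1)).and (hc (exp 1))).mono ?_⟩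
    rintro ε ⟨⟨hle, hb1 : 1 < |b ε|⟩, hce : exp 1 < |c ε|⟩
    have hc₀ : 0 < |c ε| := (exp_pos 1).trans hce
    have hlogc : 1 < log |c ε| := (lt_log_iff_exp_lt hc₀).mpr hce
    have hlogb : log |b ε| ≤ log H + m * log |c ε| := by
      rw [← log_pow, ← log_mul hH.ne' (pow_pos hc₀ m).ne']
      exact log_le_log (by linarith) hle
    dsimp only
    rw [abs_of_pos (log_pos hb1), abs_of_pos (one_pos.trans hlogc)]
    nlinarith [le_abs_self (log H), abs_nonneg (log H)]
  · rintro ⟨H, -, hle⟩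
    refine mem_RMs_AGgen_iff.mpr ⟨⌈H⌉₊, 1, one_pos, ((hle.and (hb 1)).and (hc 1)).mono ?_⟩
    rintro ε ⟨⟨hle, hb1 : 1 < |b ε|⟩, hc1 : 1 < |c ε|⟩
    have hlogc : 0 < log |c ε| := log_pos hc1
    rw [abs_of_pos (log_pos hb1), abs_of_pos hlogc] at hle
    rw [one_mul, ← log_le_log_iff (by linarith) (by positivity), log_pow]
    exact hle.trans (by gcongr; exact Nat.le_ceil H)

theorem RMs_AGgen_ssubset_iff {b c : I01 → ℝ} (hb : LimTopS fun ε => |b ε|)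
    (hc : LimTopS fun ε => |c ε|) :
    RMs (AGgen b) ⊂ RMs (AGgen c) ↔
      BigOs (fun ε => log |b ε|) (fun ε => log |c ε|) ∧
        ¬BigOs (fun ε => log |c ε|) (fun ε => log |b ε|) := by
  rw [Set.ssubset_def, RMs_AGgen_subset_iff_mem, RMs_AGgen_subset_iff_mem,
    mem_RMs_AGgen_iff_bigOs_log hb hc, mem_RMs_AGgen_iff_bigOs_log hc hb]

theorem bigOs_iff_of_sq {x y x' y' : I01 → ℝ}
    (h : EvS fun ε => ∀ H, 0 ≤ H → (|x ε| ≤ H * |y ε| ↔ |x' ε| ≤ H ^ 2 * |y' ε|)) :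
    BigOs x y ↔ BigOs x' y' := by
  constructor
  · rintro ⟨H, hH, hle⟩
    exact ⟨H ^ 2, by positivity, (hle.and h).mono fun ε ⟨hle, h⟩ => (h H hH.le).mp hle⟩
  · rintro ⟨H, hH, hle⟩
    refine ⟨√H, sqrt_pos.mpr hH, (hle.and h).mono fun ε ⟨hle, h⟩ => ?_⟩
    rwa [h _ (sqrt_nonneg H), sq_sqrt hH.le]

theorem le_mul_sqrt_mul_iff {a b H : ℝ} (ha : 0 < a) (hH : 0 ≤ H) :
    a ≤ H * √(a * b) ↔ a ≤ H ^ 2 * b := by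
  rw [← sqrt_sq hH, ← sqrt_mul (sq_nonneg _), le_sqrt' ha, sq_sqrt (sq_nonneg H), sq a,
    mul_left_comm, mul_le_mul_iff_right₀ ha]

theorem sqrt_mul_le_mul_iff {a b H : ℝ} (ha : 0 < a) (hH : 0 ≤ H) :
    √(a * b) ≤ H * a ↔ b ≤ H ^ 2 * a := by
  rw [sqrt_le_iff, mul_pow, sq a, ← mul_assoc, mul_comm (H ^ 2 * a) a, mul_le_mul_iff_right₀ ha]
  exact and_iff_right (by positivity)

noncomputable def geomMean (u v : I01 → ℝ) : I01 → ℝ := fun ε => √(|u ε| * |v ε|)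

theorem geomMean_comm (u v : I01 → ℝ) : geomMean u v = geomMean v u := by
  funext ε
  simp only [geomMean, mul_comm]

theorem bigOs_geomMean_right_iff {u v : I01 → ℝ} (hu : EvS fun ε => u ε ≠ 0) :
    BigOs u (geomMean u v) ↔ BigOs u v :=
  bigOs_iff_of_sq <| hu.mono fun ε hε H hH => by
    rw [geomMean, abs_of_nonneg (sqrt_nonneg _)]
    exact le_mul_sqrt_mul_iff (abs_pos.mpr hε) hH

theorem bigOs_geomMean_left_iff {u v : I01 → ℝ} (hu : EvS fun ε => u ε ≠ 0) :
    BigOs (geomMean u v) u ↔ BigOs v u :=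
  bigOs_iff_of_sq <| hu.mono fun ε hε H hH => by
    rw [geomMean, abs_of_nonneg (sqrt_nonneg _)]
    exact sqrt_mul_le_mul_iff (abs_pos.mpr hε) hH

theorem LimTopS.geomMean {u v : I01 → ℝ} (hu : LimTopS u) (hv : LimTopS v) :
    LimTopS (geomMean u v) := by
  intro M
  refine ((hu (max M 0)).and (hv (max M 0))).mono fun ε ⟨hue, hve⟩ => ?_
  have hM : max M 0 ^ 2 < |u ε| * |v ε| := by
    rw [sq]
    exact mul_lt_mul'' (hue.trans_le (le_abs_self _)) (hve.trans_le (le_abs_self _))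
      (le_max_right _ _) (le_max_right _ _)
  exact (le_max_left M 0).trans_lt ((lt_sqrt (le_max_right _ _)).mpr hM)

/-- Between the moderate classes of two principal AGs on `𝕀ˢ` there always is
a third one, strictly. -/
theorem principal_dense (b₁ b₂ : I01 → ℝ)
    (h1 : IsAGs (AGgen b₁)) (h2 : IsAGs (AGgen b₂))
    (hsub : RMs (AGgen b₁) ⊂ RMs (AGgen b₂)) :
    ∃ b₃ : I01 → ℝ, IsAGs (AGgen b₃) ∧
      RMs (AGgen b₁) ⊂ RMs (AGgen b₃) ∧
      RMs (AGgen b₃) ⊂ RMs (AGgen b₂) := by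
  have hb₁ := h1.limTopS_abs
  have hb₂ := h2.limTopS_abs
  set u : I01 → ℝ := fun ε => log |b₁ ε|
  set v : I01 → ℝ := fun ε => log |b₂ ε|
  have hu : LimTopS u := hb₁.comp tendsto_log_atTop
  have hv : LimTopS v := hb₂.comp tendsto_log_atTop
  have hu₀ : EvS fun ε => u ε ≠ 0 := (hu 0).mono fun ε h => h.ne'
  have hv₀ : EvS fun ε => v ε ≠ 0 := (hv 0).mono fun ε h => h.ne'
  obtain ⟨huv, hvu⟩ := (RMs_AGgen_ssubset_iff hb₁ hb₂).mp hsub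
  have hb₃ : LimTopS fun ε => |exp (geomMean u v ε)| := by
    simpa only [abs_exp] using (hu.geomMean hv).comp tendsto_exp_atTop
  have hlog : (fun ε => log |exp (geomMean u v ε)|) = geomMean u v := by
    simp only [abs_exp, log_exp]
  refine ⟨fun ε => exp (geomMean u v ε),
    isAGs_AGgen_of_one_le (fun ε => one_le_exp (sqrt_nonneg _)) (by simpa only [abs_exp] using hb₃),
    ?_, ?_⟩
  · rw [RMs_AGgen_ssubset_iff hb₁ hb₃, hlog, bigOs_geomMean_right_iff hu₀,
      bigOs_geomMean_left_iff hu₀]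
    exact ⟨huv, hvu⟩
  · rw [RMs_AGgen_ssubset_iff hb₃ hb₂, hlog, geomMean_comm, bigOs_geomMean_right_iff hv₀,
      bigOs_geomMean_left_iff hv₀]
    exact ⟨huv, hvu⟩
end

section
/- Let ℬ be an asymptotic gauge on a set of indices 𝕀 and μ:ℝ→ℝ_{≥0} a non-decreasing function with lim_{x→+∞} μ(x) = +∞ and such that for every b∈ℬ there exists c∈ℬ with μ(b_ε)² <_𝕀 μ(c_ε). Then μ(ℬ) := {(μ(H·b_ε))_ε | H∈ℝ_{>0}, b∈ℬ} is an asymptotic gauge on 𝕀. -/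
/-- `μ(ℬ) = {(μ(H · b_ε))_ε ∣ H > 0, b ∈ ℬ}`. -/
def muAG {I : Type} (mu : ℝ → ℝ) (B : Set (I → ℝ)) : Set (I → ℝ) :=
  {g | ∃ H : ℝ, 0 < H ∧ ∃ b ∈ B, g = fun ε => mu (H * b ε)}

/-! Reading "for `ε` sufficiently small in `A_{≤a}`" as a filter turns `EvSmall`, `BigO` and
`LimTop` into `∀ᶠ`, `=O[·]` and `Tendsto`. Given `b, c ∈ ℬ`, the gauge axioms produce `t ∈ ℬ`
with `b, c = o(t)` and `t → +∞`: dominate `|b| + |c|` by some `s ∈ ℬ`, multiply `s` by an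
element of `ℬ` tending to `+∞`, and absorb the product into `ℬ`. Then eventually
`μ(H b), μ(K c) ≤ μ(t)` and `μ(t) ≥ 1`, so their product and sum are at most `μ(t)²` and
`2 μ(t)²`, both below `μ(u)` for the `u ∈ ℬ` given by the hypothesis on `μ`. -/

open Filter Asymptotics

namespace SoI

variable {I : Type} {S : SoI I} {A A' : Set I} {a : I}

/-- The filter of "`ε` sufficiently small in `A_{≤a}`". -/
def smallFilter (S : SoI I) (A : Set I) (a : I) : Filter I :=
  ⨅ e ∈ S.down A a, 𝓟 (S.down A e)

theorem down_mem_smallFilter {e : I} (he : e ∈ S.down A a) :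
    S.down A e ∈ S.smallFilter A a :=
  mem_iInf_of_mem e (mem_iInf_of_mem he (mem_principal_self _))

theorem evSmallOn_iff_eventually (hA : A ∈ S.sets) (ha : a ∈ A) {P : I → Prop} :
    EvSmallOn S A a P ↔ ∀ᶠ ε in S.smallFilter A a, P ε := by
  rw [smallFilter, Filter.Eventually, mem_biInf_of_directed ?_
    (show (S.down A a).Nonempty from ⟨a, ha, S.refl a⟩)]
  · simp only [mem_principal]
    rfl
  · intro e₁ he₁ e₂ he₂
    obtain ⟨d, hdA, hda, ⟨hd₁, -⟩, hd₂, -⟩ :=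
      (S.directed a a A hA ha (S.refl a)).2 e₁ e₂ he₁.1 he₁.2 he₂.1 he₂.2
    exact ⟨d, ⟨hdA, hda⟩, principal_mono.2 fun ε hε => ⟨hε.1, S.trans _ _ _ hε.2 hd₁⟩,
      principal_mono.2 fun ε hε => ⟨hε.1, S.trans _ _ _ hε.2 hd₂⟩⟩

theorem smallFilter_mono (hA' : A' ∈ S.sets) (hsub : A' ⊆ A) (ha : a ∈ A') :
    S.smallFilter A' a ≤ S.smallFilter A a := by
  refine le_iInf₂ fun e he => le_principal_iff.2 ?_
  obtain ⟨⟨x, hxA', hxe⟩, -⟩ := S.directed e a A' hA' ha he.2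
  exact mem_of_superset (down_mem_smallFilter ⟨hxA', S.trans _ _ _ hxe he.2⟩)
    fun ε hε => ⟨hsub hε.1, S.trans _ _ _ hε.2 hxe⟩

/-- The common shape of `EvSmall`, `BigO` and `LimTop`. Quantifying over all finer filters
makes conjunction a matter of intersecting the two sets of indices. -/
def Locally (S : SoI I) (Q : Filter I → Prop) : Prop :=
  ∃ A ∈ S.sets, ∀ a ∈ A, ∀ F ≤ S.smallFilter A a, Q F

variable {Q Q' : Filter I → Prop}

theorem Locally.of_forall (h : ∀ F, Q F) : S.Locally Q :=
  ⟨Set.univ, S.univ_mem, fun _ _ F _ => h F⟩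

theorem Locally.mono (h : S.Locally Q) (hQ : ∀ F, Q F → Q' F) : S.Locally Q' :=
  let ⟨A, hA, hQA⟩ := h
  ⟨A, hA, fun a ha F hF => hQ F (hQA a ha F hF)⟩

theorem Locally.and (h : S.Locally Q) (h' : S.Locally Q') :
    S.Locally fun F => Q F ∧ Q' F := by
  obtain ⟨A₁, hA₁, h₁⟩ := h
  obtain ⟨A₂, hA₂, h₂⟩ := h'
  obtain ⟨C, hC, hsub⟩ := S.inter A₁ hA₁ A₂ hA₂
  refine ⟨C, hC, fun a ha F hF => ⟨h₁ a (hsub ha).1 F ?_, h₂ a (hsub ha).2 F ?_⟩⟩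
  · exact hF.trans (smallFilter_mono hC (fun _ hx => (hsub hx).1) ha)
  · exact hF.trans (smallFilter_mono hC (fun _ hx => (hsub hx).2) ha)

theorem locally_eventually_iff {P : I → Prop} :
    S.Locally (fun F => ∀ᶠ ε in F, P ε) ↔ EvSmall S P := by
  constructor
  · rintro ⟨A, hA, h⟩
    exact ⟨A, hA, fun a ha => (evSmallOn_iff_eventually hA ha).2 (h a ha _ le_rfl)⟩
  · rintro ⟨A, hA, h⟩
    exact ⟨A, hA, fun a ha F hF => ((evSmallOn_iff_eventually hA ha).1 (h a ha)).filter_mono hF⟩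

theorem locally_isBigO_iff {x y : I → ℝ} : S.Locally (fun F => x =O[F] y) ↔ BigO S x y := by
  have hOn : ∀ {A}, A ∈ S.sets → ∀ {a}, a ∈ A →
      (BigOOn S A a x y ↔ x =O[S.smallFilter A a] y) := fun hA _ ha => by
    simp only [isBigO_iff', Real.norm_eq_abs, ← evSmallOn_iff_eventually hA ha]
    rfl
  constructor
  · rintro ⟨A, hA, h⟩
    exact ⟨A, hA, fun a ha => (hOn hA ha).2 (h a ha _ le_rfl)⟩
  · rintro ⟨A, hA, h⟩
    exact ⟨A, hA, fun a ha F hF => ((hOn hA ha).1 (h a ha)).mono hF⟩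

theorem locally_tendsto_atTop_iff {i : I → ℝ} :
    S.Locally (fun F => Tendsto i F atTop) ↔ LimTop S i := by
  constructor
  · rintro ⟨A, hA, h⟩
    refine ⟨A, hA, fun a ha M => ?_⟩
    obtain ⟨e, he, hM⟩ := (evSmallOn_iff_eventually hA ha).2
      ((h a ha _ le_rfl).eventually_gt_atTop M)
    exact ⟨e, he.2, fun ε hεA hεe => hM ε ⟨hεA, hεe⟩⟩
  · rintro ⟨A, hA, h⟩
    refine ⟨A, hA, fun a ha F hF => tendsto_atTop.2 fun M => ?_⟩
    obtain ⟨e, hea, hM⟩ := h a ha M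
    obtain ⟨⟨x, hxA, hxe⟩, -⟩ := S.directed e a A hA ha hea
    refine hF (mem_of_superset (down_mem_smallFilter ⟨hxA, S.trans _ _ _ hxe hea⟩) ?_)
    exact fun ε hε => (hM ε hε.1 (S.trans _ _ _ hε.2 hxe)).le

end SoI

section Asymptotics

variable {α : Type*} {l : Filter α}

theorem isBigO_of_abs_add {f g k : α → ℝ} (h : (fun x => |f x| + |g x|) =O[l] k) :
    f =O[l] k ∧ g =O[l] k := by
  refine ⟨(isBigO_of_le l fun x => ?_).trans h, (isBigO_of_le l fun x => ?_).trans h⟩ <;>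
    rw [Real.norm_eq_abs, Real.norm_eq_abs]
  · exact (le_add_of_nonneg_right (abs_nonneg _)).trans (le_abs_self _)
  · exact (le_add_of_nonneg_left (abs_nonneg _)).trans (le_abs_self _)

theorem isLittleO_of_mul_isBigO {i b t : α → ℝ} (hi : Tendsto i l atTop)
    (h : (fun x => i x * b x) =O[l] t) : b =o[l] t := by
  have hone : (fun _ => (1 : ℝ)) =o[l] i :=
    (isLittleO_one_left_iff ℝ).2 (tendsto_norm_atTop_atTop.comp hi)
  simpa only [one_mul] using (hone.mul_isBigO (isBigO_refl b l)).trans_isBigO h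

theorem tendsto_atTop_of_isBigO {i t : α → ℝ} (hi : Tendsto i l atTop) (h : i =O[l] t)
    (ht : ∀ᶠ x in l, 0 < t x) : Tendsto t l atTop := by
  have hone : (fun _ => (1 : ℝ)) =o[l] t :=
    ((isLittleO_one_left_iff ℝ).2 (tendsto_norm_atTop_atTop.comp hi)).trans_isBigO h
  refine ((isLittleO_one_left_iff ℝ).1 hone).congr' ?_
  filter_upwards [ht] with x hx using by rw [Real.norm_eq_abs, abs_of_pos hx]

theorem Monotone.eventually_le_of_isLittleO {mu : ℝ → ℝ} (hmono : Monotone mu)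
    {f t : α → ℝ} (hf : f =o[l] t) (ht : Tendsto t l atTop) : ∀ᶠ x in l, mu (f x) ≤ mu (t x) := by
  filter_upwards [hf.bound one_pos, ht.eventually_ge_atTop 0] with x hx ht0
  rw [Real.norm_eq_abs, Real.norm_eq_abs, abs_of_nonneg ht0, one_mul] at hx
  exact hmono ((le_abs_self _).trans hx)

theorem isBigO_mu_of_isLittleO {mu : ℝ → ℝ} (h0 : ∀ x, 0 ≤ mu x) (hmono : Monotone mu)
    (htop : Tendsto mu atTop atTop) {f g t u : α → ℝ} (hf : f =o[l] t) (hg : g =o[l] t)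
    (ht : Tendsto t l atTop) (hu : ∀ᶠ x in l, mu (t x) ^ 2 < mu (u x)) :
    (fun x => mu (f x) * mu (g x)) =O[l] (fun x => mu (u x)) ∧
      (fun x => |mu (f x)| + |mu (g x)|) =O[l] (fun x => mu (u x)) ∧
      ∀ᶠ x in l, 0 < mu (u x) := by
  have hbound : ∀ᶠ x in l, mu (f x) * mu (g x) ≤ mu (u x) ∧
      mu (f x) + mu (g x) ≤ 2 * mu (u x) ∧ 0 < mu (u x) := by
    filter_upwards [hmono.eventually_le_of_isLittleO hf ht, hmono.eventually_le_of_isLittleO hg ht,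
      (htop.comp ht).eventually_ge_atTop 1, hu] with x hfx hgx (ht1 : 1 ≤ mu (t x)) hux
    have hprod := mul_le_mul hfx hgx (h0 _) (h0 _)
    have ht_le_sq : mu (t x) ≤ mu (t x) ^ 2 := by nlinarith
    exact ⟨by nlinarith, by linarith, by nlinarith⟩
  refine ⟨IsBigO.of_bound 1 ?_, IsBigO.of_bound 2 ?_, hbound.mono fun _ h => h.2.2⟩ <;>
    filter_upwards [hbound] with x hx
  · rw [Real.norm_eq_abs, Real.norm_eq_abs, abs_of_nonneg (mul_nonneg (h0 _) (h0 _)),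
      abs_of_nonneg (h0 _), one_mul]
    exact hx.1
  · rw [Real.norm_eq_abs, Real.norm_eq_abs, abs_of_nonneg (h0 (f x)), abs_of_nonneg (h0 (g x)),
      abs_of_nonneg (add_nonneg (h0 _) (h0 _)), abs_of_nonneg (h0 _)]
    exact hx.2.1

end Asymptotics

namespace IsAG

variable {I : Type} {S : SoI I} {B : Set (I → ℝ)}

theorem exists_isLittleO (hB : IsAG S B) {b : I → ℝ} (hb : b ∈ B) :
    ∃ t ∈ B, S.Locally fun F => b =o[F] t ∧ Tendsto t F atTop := by
  obtain ⟨i, hiB, hi⟩ := hB.1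
  obtain ⟨p, hpB, hp⟩ := hB.2.1 i hiB b hb
  obtain ⟨t, htB, ht_pos, ht⟩ := hB.2.2.2 p hpB i hiB
  refine ⟨t, htB, ((SoI.locally_tendsto_atTop_iff.2 hi).and (SoI.locally_isBigO_iff.2 hp) |>.and
    ((SoI.locally_isBigO_iff.2 ht).and (SoI.locally_eventually_iff.2 ht_pos))).mono ?_⟩
  rintro F ⟨⟨hiF, hpF⟩, htF, ht_posF⟩
  obtain ⟨hpt, hit⟩ := isBigO_of_abs_add htF
  exact ⟨isLittleO_of_mul_isBigO hiF (hpF.trans hpt), tendsto_atTop_of_isBigO hiF hit ht_posF⟩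

theorem exists_isLittleO_of_mem_of_mem (hB : IsAG S B) {b c : I → ℝ} (hb : b ∈ B)
    (hc : c ∈ B) : ∃ t ∈ B, S.Locally fun F => b =o[F] t ∧ c =o[F] t ∧ Tendsto t F atTop := by
  obtain ⟨s, hsB, -, hs⟩ := hB.2.2.2 b hb c hc
  obtain ⟨t, htB, ht⟩ := hB.exists_isLittleO hsB
  refine ⟨t, htB, ((SoI.locally_isBigO_iff.2 hs).and ht).mono ?_⟩
  rintro F ⟨hsF, hst, htF⟩
  obtain ⟨hbs, hcs⟩ := isBigO_of_abs_add hsF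
  exact ⟨hbs.trans_isLittleO hst, hcs.trans_isLittleO hst, htF⟩

theorem exists_mu_bounds (hB : IsAG S B) {mu : ℝ → ℝ} (h0 : ∀ x, 0 ≤ mu x)
    (hmono : Monotone mu) (htop : Tendsto mu atTop atTop)
    (hsq : ∀ b ∈ B, ∃ c ∈ B, NetGt S (fun ε => mu (c ε)) (fun ε => (mu (b ε)) ^ 2))
    (H : ℝ) {b : I → ℝ} (hb : b ∈ B) (K : ℝ) {c : I → ℝ} (hc : c ∈ B) :
    ∃ u ∈ B, S.Locally fun F =>
      (fun ε => mu (H * b ε) * mu (K * c ε)) =O[F] (fun ε => mu (u ε)) ∧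
      (fun ε => |mu (H * b ε)| + |mu (K * c ε)|) =O[F] (fun ε => mu (u ε)) ∧
      ∀ᶠ ε in F, 0 < mu (u ε) := by
  obtain ⟨t, htB, ht⟩ := hB.exists_isLittleO_of_mem_of_mem hb hc
  obtain ⟨u, huB, hu⟩ := hsq t htB
  refine ⟨u, huB, (ht.and (SoI.locally_eventually_iff.2 hu)).mono ?_⟩
  rintro F ⟨⟨hbt, hct, htF⟩, huF⟩
  exact isBigO_mu_of_isLittleO h0 hmono htop (hbt.const_mul_left H) (hct.const_mul_left K)
    htF huF

end IsAG

/-- If `μ : ℝ → ℝ_{≥0}` is non-decreasing, tends to `+∞` at `+∞` and satisfies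
`μ(b_ε)² <_𝕀 μ(c_ε)` for suitable `c`, then `μ(ℬ)` is an AG. -/
theorem muAG_isAG {I : Type} (S : SoI I) (B : Set (I → ℝ)) (hB : IsAG S B)
    (mu : ℝ → ℝ) (h0 : ∀ x, 0 ≤ mu x) (hmono : Monotone mu)
    (htop : Filter.Tendsto mu Filter.atTop Filter.atTop)
    (hsq : ∀ b ∈ B, ∃ c ∈ B,
      NetGt S (fun ε => mu (c ε)) (fun ε => (mu (b ε)) ^ 2)) :
    IsAG S (muAG mu B) := by
  have hmem : ∀ c ∈ B, (fun ε => mu (c ε)) ∈ muAG mu B :=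
    fun c hc => ⟨1, one_pos, c, hc, by simp only [one_mul]⟩
  refine ⟨?_, ?_, ?_, ?_⟩
  · obtain ⟨i, hiB, hi⟩ := hB.1
    refine ⟨_, hmem i hiB, SoI.locally_tendsto_atTop_iff.1 ?_⟩
    exact (SoI.locally_tendsto_atTop_iff.2 hi).mono fun F hF => htop.comp hF
  · rintro _ ⟨H, -, b, hb, rfl⟩ _ ⟨K, -, c, hc, rfl⟩
    obtain ⟨u, huB, hu⟩ := hB.exists_mu_bounds h0 hmono htop hsq H hb K hc
    exact ⟨_, hmem u huB, SoI.locally_isBigO_iff.1 (hu.mono fun _ h => h.1)⟩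
  · rintro i hi r
    exact ⟨i, hi, SoI.locally_isBigO_iff.1
      (SoI.Locally.of_forall fun F => (isBigO_refl i F).const_mul_left r)⟩
  · rintro _ ⟨H, -, b, hb, rfl⟩ _ ⟨K, -, c, hc, rfl⟩
    obtain ⟨u, huB, hu⟩ := hB.exists_mu_bounds h0 hmono htop hsq H hb K hc
    exact ⟨_, hmem u huB, SoI.locally_eventually_iff.1 (hu.mono fun _ h => h.2.2),
      SoI.locally_isBigO_iff.1 (hu.mono fun _ h => h.2.1)⟩
end

section
/- Let b,c:(0,1]→ℝ be nets with lim_{ε→0⁺} b_ε = lim_{ε→0⁺} c_ε = +∞, and suppose η,λ:(0,1]→(0,1] are mutually inverse maps with lim_{ε→0⁺}η(ε)=lim_{ε→0⁺}λ(ε)=0, b_{η(ε)} = O(c_ε) and c_{λ(ε)} = O(b_ε) as ε→0⁺. Then ℝ_M(AG(b)∘η) = ℝ_M(AG(c)) and ℝ_M(AG(c)∘λ) = ℝ_M(AG(b)); in particular AG(b) and AG(c) are isomorphic in AG₁. -/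
/-- The special set of indices `𝕀ˢ = ((0,1], ≤, {(0, ε₀] ∣ ε₀ ∈ (0,1]})`. -/
def Is : SoI I01 where
  le a b := a.1 ≤ b.1
  refl _ := le_refl _
  trans _ _ _ h1 h2 := le_trans h1 h2
  sets := {S | ∃ e : I01, S = {ε : I01 | ε.1 ≤ e.1}}
  empty_not_mem := by
    rintro ⟨e, he⟩
    have : e ∈ ({ε : I01 | ε.1 ≤ e.1}) := by exact le_refl e.1
    rw [← he] at this
    exact this
  univ_mem := ⟨⟨1, by norm_num⟩, by
    ext ε
    simp only [Set.mem_univ, Set.mem_setOf_eq, true_iff]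
    exact ε.2.2⟩
  inter := by
    rintro A ⟨e1, rfl⟩ B ⟨e2, rfl⟩
    rcases le_total e1.1 e2.1 with h | h
    · exact ⟨_, ⟨e1, rfl⟩, fun ε hε => ⟨hε, le_trans hε h⟩⟩
    · exact ⟨_, ⟨e2, rfl⟩, fun ε hε => ⟨le_trans hε h, hε⟩⟩
  directed := by
    rintro e a A ⟨e0, rfl⟩ ha hea
    refine ⟨⟨e, le_trans hea ha, le_refl _⟩, ?_⟩
    intro b c hb hbe hc hce
    have hmpos : 0 < min b.1 c.1 := lt_min b.2.1 c.2.1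
    have hmb : min b.1 c.1 ≤ b.1 := min_le_left _ _
    have hmc : min b.1 c.1 ≤ c.1 := min_le_right _ _
    have hb1 : b.1 ≤ 1 := b.2.2
    refine ⟨⟨min b.1 c.1 / 2, by positivity, by linarith⟩, ?_, ?_, ⟨?_, ?_⟩, ⟨?_, ?_⟩⟩
    · show min b.1 c.1 / 2 ≤ e0.1
      have : b.1 ≤ e0.1 := hb
      linarith
    · show min b.1 c.1 / 2 ≤ e.1
      linarith
    · show min b.1 c.1 / 2 ≤ b.1
      linarith
    · intro h
      have := congrArg Subtype.val h
      simp only at this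
      have : min b.1 c.1 / 2 = b.1 := this
      linarith
    · show min b.1 c.1 / 2 ≤ c.1
      linarith
    · intro h
      have := congrArg Subtype.val h
      simp only at this
      have : min b.1 c.1 / 2 = c.1 := this
      linarith

/-! Moderateness only sees the generators up to big-O, and composing with `η` is harmless because
`η` tends to `0⁺`, so `c = c ∘ λ ∘ η = O(b ∘ η)`. Hence `AG(b) ∘ η = AG(b ∘ η)` and `AG(c)`
generate the same moderate nets, and symmetrically for `λ`. -/

open Filter Asymptotics

lemma eventually_zeroPlus_iff {P : I01 → Prop} : (∀ᶠ ε in zeroPlus, P ε) ↔ EvS P := by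
  rw [zeroPlus, ((nhdsGT_basis (0 : ℝ)).comap _).eventually_iff]
  constructor
  · rintro ⟨u, hu, hP⟩
    refine ⟨⟨min (u / 2) 1, by positivity, min_le_right _ _⟩, fun ε hε => hP ?_⟩
    have : ε.1 ≤ min (u / 2) 1 := hε
    exact ⟨ε.2.1, by linarith [min_le_left (u / 2) 1]⟩
  · rintro ⟨ε₀, hP⟩
    exact ⟨ε₀.1, ε₀.2.1, fun ε hε => hP ε hε.2.le⟩

lemma bigOs_iff_isBigO {x y : I01 → ℝ} : BigOs x y ↔ x =O[zeroPlus] y := by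
  constructor
  · rintro ⟨H, -, h⟩
    exact IsBigO.of_bound H (eventually_zeroPlus_iff.mpr h)
  · intro h
    obtain ⟨H, hH, h⟩ := h.exists_pos
    exact ⟨H, hH, eventually_zeroPlus_iff.mp h.bound⟩

lemma tendsto_zeroPlus_iff {f : I01 → I01} :
    Tendsto f zeroPlus zeroPlus ↔ Tendsto (fun ε => (f ε).1) zeroPlus (nhds 0) := by
  rw [zeroPlus, tendsto_comap_iff, ← zeroPlus, tendsto_nhdsWithin_iff]
  exact and_iff_left (Eventually.of_forall fun ε => (f ε).2.1)

lemma compS_AGgen (b : I01 → ℝ) (f : I01 → I01) : compS (AGgen b) f = AGgen (b ∘ f) := by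
  ext g
  constructor
  · rintro ⟨-, ⟨m, rfl⟩, rfl⟩
    exact ⟨m, rfl⟩
  · rintro ⟨m, rfl⟩
    exact ⟨_, ⟨m, rfl⟩, rfl⟩

lemma RMs_AGgen_mono {b c : I01 → ℝ} (h : b =O[zeroPlus] c) :
    RMs (AGgen b) ⊆ RMs (AGgen c) := by
  rintro x ⟨-, ⟨m, rfl⟩, hx⟩
  exact ⟨_, ⟨m, rfl⟩, bigOs_iff_isBigO.mpr ((bigOs_iff_isBigO.mp hx).trans (h.pow m))⟩

lemma RMs_AGgen_eq {b c : I01 → ℝ} (hbc : b =O[zeroPlus] c) (hcb : c =O[zeroPlus] b) :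
    RMs (AGgen b) = RMs (AGgen c) :=
  (RMs_AGgen_mono hbc).antisymm (RMs_AGgen_mono hcb)

lemma isBigO_comp_of_leftInverse {b c : I01 → ℝ} {eta lam : I01 → I01}
    (hinv : Function.LeftInverse lam eta) (heta : Tendsto eta zeroPlus zeroPlus)
    (hcb : (c ∘ lam) =O[zeroPlus] b) : c =O[zeroPlus] (b ∘ eta) := by
  simpa only [Function.comp_assoc, hinv.comp_eq_id, Function.comp_id] using hcb.comp_tendsto heta

lemma RMs_compS_AGgen_eq {b c : I01 → ℝ} {eta lam : I01 → I01}
    (hinv : Function.LeftInverse lam eta) (heta : Tendsto eta zeroPlus zeroPlus)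
    (hbc : BigOs (b ∘ eta) c) (hcb : BigOs (c ∘ lam) b) :
    RMs (compS (AGgen b) eta) = RMs (AGgen c) := by
  rw [compS_AGgen]
  exact RMs_AGgen_eq (bigOs_iff_isBigO.mp hbc)
    (isBigO_comp_of_leftInverse hinv heta (bigOs_iff_isBigO.mp hcb))

lemma isMorphism_Is_of_tendsto {f : I01 → I01} (hf : Tendsto f zeroPlus zeroPlus) :
    IsMorphism Is Is f := by
  rintro A ⟨e₀, rfl⟩ a -
  refine ⟨Set.univ, Is.univ_mem, fun b _ α ⟨hαA, _⟩ => ?_⟩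
  have hbelow : ∀ᶠ ε in zeroPlus, ε.1 ≤ b.1 ∧ (f ε).1 ≤ α.1 :=
    (eventually_zeroPlus_iff.mpr ⟨b, fun _ h => h⟩).and
      (hf.eventually (eventually_zeroPlus_iff.mpr ⟨α, fun _ h => h⟩))
  obtain ⟨e, he⟩ := eventually_zeroPlus_iff.mp hbelow
  refine ⟨e, ⟨trivial, (he e le_rfl).1⟩, fun ε ⟨_, hε⟩ => ?_⟩
  have hfα : (f ε).1 ≤ α.1 := (he ε hε).2
  exact ⟨le_trans hfα hαA, hfα⟩

theorem AGgen_iso_general (b c : I01 → ℝ)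
    (eta lam : I01 → I01)
    (hinv₁ : ∀ ε, eta (lam ε) = ε) (hinv₂ : ∀ ε, lam (eta ε) = ε)
    (heta0 : Filter.Tendsto (fun ε => (eta ε).1) zeroPlus (nhds 0))
    (hlam0 : Filter.Tendsto (fun ε => (lam ε).1) zeroPlus (nhds 0))
    (hbc : BigOs (fun ε => b (eta ε)) c)
    (hcb : BigOs (fun ε => c (lam ε)) b) :
    RMs (compS (AGgen b) eta) = RMs (AGgen c) ∧
    RMs (compS (AGgen c) lam) = RMs (AGgen b) ∧
    IsMorphism Is Is eta ∧ IsMorphism Is Is lam := by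
  have heta : Tendsto eta zeroPlus zeroPlus := tendsto_zeroPlus_iff.mpr heta0
  have hlam : Tendsto lam zeroPlus zeroPlus := tendsto_zeroPlus_iff.mpr hlam0
  exact ⟨RMs_compS_AGgen_eq hinv₂ heta hbc hcb, RMs_compS_AGgen_eq hinv₁ hlam hcb hbc,
    isMorphism_Is_of_tendsto heta, isMorphism_Is_of_tendsto hlam⟩

/-- If `b, c` are infinite nets on `(0,1]` and `η, λ` are mutually inverse
maps tending to `0` at `0⁺` with `b_{η(ε)} = O(c_ε)` and `c_{λ(ε)} = O(b_ε)`,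
then `ℝ_M(AG(b) ∘ η) = ℝ_M(AG(c))` and `ℝ_M(AG(c) ∘ λ) = ℝ_M(AG(b))`; in
particular `η` and `λ` are mutually inverse `Ag₁`-isomorphisms between
`AG(b)` and `AG(c)`. -/
theorem AGgen_iso (b c : I01 → ℝ)
    (hb : Filter.Tendsto b zeroPlus Filter.atTop)
    (hc : Filter.Tendsto c zeroPlus Filter.atTop)
    (eta lam : I01 → I01)
    (hinv₁ : ∀ ε, eta (lam ε) = ε) (hinv₂ : ∀ ε, lam (eta ε) = ε)
    (heta0 : Filter.Tendsto (fun ε => (eta ε).1) zeroPlus (nhds 0))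
    (hlam0 : Filter.Tendsto (fun ε => (lam ε).1) zeroPlus (nhds 0))
    (hbc : BigOs (fun ε => b (eta ε)) c)
    (hcb : BigOs (fun ε => c (lam ε)) b) :
    RMs (compS (AGgen b) eta) = RMs (AGgen c) ∧
    RMs (compS (AGgen c) lam) = RMs (AGgen b) ∧
    IsMorphism Is Is eta ∧ IsMorphism Is Is lam :=
  AGgen_iso_general b c eta lam hinv₁ hinv₂ heta0 hlam0 hbc hcb
end
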